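/- arXiv:1504.06130 — 4 statements merged into one kernel-verified Lean document; each statement's English description precedes it below -/
import Mathlib

section
/- If T : ℤ² → τ is a tiling with period vector p ≠ 0 (i.e., T(x + p) = T(x) for all x), and there is a unique grid of vertical and horizontal lines cutting T into N×N macro-tiles (i.e., a unique offset (a,b) ∈ {0,…,N−1}² such that the decomposition into N×N blocks aligned at (a,b) is a valid macro-tile splitting), then both coordinates of p are divisible by N. -/
/-! Translation by the period `p` carries the splitting at offset `(a, b)` to a splitting at
`(a + p.1, b + p.2)` reduced modulo `N`; by uniqueness that offset is `(a, b)` again, so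
`p ≡ 0` modulo `N` in both coordinates. -/

structure WangTile (C : Type) where
  left : C
  right : C
  bottom : C
  top : C

/-- A valid Wang tiling of the plane by the tile set `τ`. -/
def IsTiling {C : Type} (τ : Set (WangTile C)) (T : ℤ × ℤ → WangTile C) : Prop :=
  (∀ x, T x ∈ τ) ∧
  (∀ x y : ℤ, (T (x, y)).right = (T (x + 1, y)).left) ∧
  (∀ x y : ℤ, (T (x, y)).top = (T (x, y + 1)).bottom)

/-- An `N × N` macro-tile: an `N × N` array of tiles. -/
def MacroTile (C : Type) (N : ℕ) := Fin N × Fin N → WangTile C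

/-- The decomposition of `T` into `N × N` blocks aligned at offset `ab` is a valid
macro-tile splitting: every block belongs to `ρ`. -/
def SplitsAt {C : Type} {N : ℕ} (ρ : Set (MacroTile C N)) (T : ℤ × ℤ → WangTile C)
    (ab : Fin N × Fin N) : Prop :=
  ∀ i j : ℤ, (fun u : Fin N × Fin N =>
    T (((ab.1 : ℕ) : ℤ) + i * N + ((u.1 : ℕ) : ℤ), ((ab.2 : ℕ) : ℤ) + j * N + ((u.2 : ℕ) : ℤ))) ∈ ρ

theorem Int.exists_fin_modEq {N : ℕ} (hN : 0 < N) (k : ℤ) :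
    ∃ a : Fin N, ((a : ℕ) : ℤ) ≡ k [ZMOD N] := by
  have hNZ : (0 : ℤ) < N := by exact_mod_cast hN
  have hlt := Int.emod_lt_of_pos k hNZ
  refine ⟨⟨(k % N).toNat, by omega⟩, ?_⟩
  rw [Int.toNat_of_nonneg (Int.emod_nonneg _ hNZ.ne')]
  exact Int.mod_modEq k N

theorem SplitsAt.of_periodic {C : Type} {N : ℕ} {ρ : Set (MacroTile C N)}
    {T : ℤ × ℤ → WangTile C} {p : ℤ × ℤ} (hper : ∀ x : ℤ × ℤ, T (x + p) = T x)
    {ab ab' : Fin N × Fin N} (hab : SplitsAt ρ T ab)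
    (h₁ : ((ab'.1 : ℕ) : ℤ) ≡ (ab.1 : ℕ) + p.1 [ZMOD N])
    (h₂ : ((ab'.2 : ℕ) : ℤ) ≡ (ab.2 : ℕ) + p.2 [ZMOD N]) :
    SplitsAt ρ T ab' := by
  obtain ⟨q, hq⟩ := h₁.dvd
  obtain ⟨r, hr⟩ := h₂.dvd
  intro i j
  convert hab (i - q) (j - r) using 1
  funext u
  conv_rhs => rw [← hper]
  congr 1
  ext <;> simp only [Prod.fst_add, Prod.snd_add]
  · linear_combination -hq
  · linear_combination -hr

theorem period_coords_divisible_by_zoom_general {C : Type} (N : ℕ)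
    (ρ : Set (MacroTile C N))
    (T : ℤ × ℤ → WangTile C)
    (p : ℤ × ℤ) (hper : ∀ x : ℤ × ℤ, T (x + p) = T x)
    (huniq : ∃! ab : Fin N × Fin N, SplitsAt ρ T ab) :
    (N : ℤ) ∣ p.1 ∧ (N : ℤ) ∣ p.2 := by
  obtain ⟨ab, hab, hunique⟩ := huniq
  obtain ⟨a', ha'⟩ := Int.exists_fin_modEq ab.1.pos (ab.1 + p.1)
  obtain ⟨b', hb'⟩ := Int.exists_fin_modEq ab.1.pos (ab.2 + p.2)
  have hshift : (a', b') = ab := hunique _ (hab.of_periodic hper ha' hb')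
  subst hshift
  constructor
  · simpa using ha'.symm.dvd
  · simpa using hb'.symm.dvd

/-- If a tiling `T` has a nonzero period `p` and there is a *unique* offset giving a valid
splitting into `N × N` macro-tiles from `ρ`, then both coordinates of `p` are divisible by `N`. -/
theorem period_coords_divisible_by_zoom {C : Type} (N : ℕ) (hN : 0 < N)
    (τ : Set (WangTile C)) (ρ : Set (MacroTile C N))
    (T : ℤ × ℤ → WangTile C) (hT : IsTiling τ T)
    (p : ℤ × ℤ) (hp : p ≠ 0) (hper : ∀ x : ℤ × ℤ, T (x + p) = T x)
    (huniq : ∃! ab : Fin N × Fin N, SplitsAt ρ T ab) :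
    (N : ℤ) ∣ p.1 ∧ (N : ℤ) ∣ p.2 :=
  period_coords_divisible_by_zoom_general N ρ T p hper huniq
end

section
/- Let F : ℤ² → τ be a tiling by a self-similar tile set with zoom N. If every pattern of shape 2Nᵏ × 2Nᵏ aligned with the rank-k macro-tile grid that occurs in F occurs in every square of side at least c·Nᵏ (for some constant c independent of k), then F is quasiperiodic: every finite pattern occurring in F occurs in every sufficiently large square of F. -/
/-- The pattern `P` with (finite) domain `D` occurs in `F` at position `v`. -/
def OccursAt {A : Type} (F : ℤ × ℤ → A) (D : Finset (ℤ × ℤ)) (P : ℤ × ℤ → A)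
    (v : ℤ × ℤ) : Prop :=
  ∀ d ∈ D, F (v + d) = P d

/-- The pattern `P` (with domain `D`) occurs in `F` inside the `L × L` square with
bottom-left corner `c`. -/
def OccursInSquare {A : Type} (F : ℤ × ℤ → A) (D : Finset (ℤ × ℤ)) (P : ℤ × ℤ → A)
    (c : ℤ × ℤ) (L : ℕ) : Prop :=
  ∃ v : ℤ × ℤ, OccursAt F D P v ∧
    ∀ d ∈ D, c.1 ≤ v.1 + d.1 ∧ v.1 + d.1 < c.1 + L ∧ c.2 ≤ v.2 + d.2 ∧ v.2 + d.2 < c.2 + L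

/-- `F` is quasiperiodic (uniformly recurrent): every finite pattern occurring in `F`
occurs in every sufficiently large square of `F`. -/
def UniformlyRecurrent {A : Type} (F : ℤ × ℤ → A) : Prop :=
  ∀ (D : Finset (ℤ × ℤ)) (P : ℤ × ℤ → A), (∃ v, OccursAt F D P v) →
    ∃ L : ℕ, ∀ c : ℤ × ℤ, OccursInSquare F D P c L

/-- `F` agrees at the translates `p` and `q` on an `s × s` square. -/
def AgreesOn {A : Type} (F : ℤ × ℤ → A) (p q : ℤ × ℤ) (s : ℕ) : Prop :=
  ∀ u : ℤ × ℤ, 0 ≤ u.1 → u.1 < s → 0 ≤ u.2 → u.2 < s → F (p + u) = F (q + u)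

/-- The `s × s` square at corner `p` lies inside the `L × L` square at corner `c`. -/
def InSquare (c : ℤ × ℤ) (L : ℕ) (p : ℤ × ℤ) (s : ℕ) : Prop :=
  c.1 ≤ p.1 ∧ p.1 + s ≤ c.1 + L ∧ c.2 ≤ p.2 ∧ p.2 + s ≤ c.2 + L

def InBox (q : ℤ × ℤ) (s : ℕ) (x : ℤ × ℤ) : Prop :=
  q.1 ≤ x.1 ∧ x.1 < q.1 + s ∧ q.2 ≤ x.2 ∧ x.2 < q.2 + s

theorem inBox_iff_sub {q x : ℤ × ℤ} {s : ℕ} :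
    InBox q s x ↔ 0 ≤ (x - q).1 ∧ (x - q).1 < s ∧ 0 ≤ (x - q).2 ∧ (x - q).2 < s := by
  simp only [InBox, Prod.fst_sub, Prod.snd_sub]
  omega

theorem InSquare.inBox {w p x : ℤ × ℤ} {L s : ℕ} (hp : InSquare w L p s) (hx : InBox p s x) :
    InBox w L x := by
  obtain ⟨h1, h2, h3, h4⟩ := hp
  obtain ⟨h5, h6, h7, h8⟩ := hx
  exact ⟨by omega, by omega, by omega, by omega⟩

theorem Finset.exists_inBox_pow (D : Finset (ℤ × ℤ)) {N : ℕ} (hN : 1 < N) :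
    ∃ (m : ℤ × ℤ) (k : ℕ), ∀ d ∈ D, InBox m (N ^ k) d := by
  obtain ⟨lo, hlo⟩ := D.bddBelow
  obtain ⟨hi, hhi⟩ := D.bddAbove
  obtain ⟨k, hk⟩ := pow_unbounded_of_one_lt (max (hi.1 - lo.1) (hi.2 - lo.2))
    (by exact_mod_cast hN : (1 : ℤ) < N)
  refine ⟨lo, k, fun d hd => ?_⟩
  obtain ⟨h1, h2⟩ := hlo hd
  obtain ⟨h3, h4⟩ := hhi hd
  push_cast [InBox]
  exact ⟨h1, by linarith [le_max_left (hi.1 - lo.1) (hi.2 - lo.2)], h2,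
    by linarith [le_max_right (hi.1 - lo.1) (hi.2 - lo.2)]⟩

theorem exists_grid_le_lt {s : ℤ} (hs : 0 < s) (o x : ℤ) :
    ∃ i : ℤ, o + i * s ≤ x ∧ x < o + i * s + s := by
  have h := sub_toIcoDiv_zsmul_mem_Ico hs o x
  rw [smul_eq_mul, Set.mem_Ico] at h
  exact ⟨toIcoDiv hs o x, by linarith [h.1], by linarith [h.2]⟩

theorem exists_grid_inBox_two_mul {s : ℕ} (hs : 0 < s) (o m : ℤ × ℤ) :
    ∃ i j : ℤ, ∀ x, InBox m s x → InBox (o.1 + i * s, o.2 + j * s) (2 * s) x := by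
  obtain ⟨i, hi1, hi2⟩ := exists_grid_le_lt (by exact_mod_cast hs : (0 : ℤ) < s) o.1 m.1
  obtain ⟨j, hj1, hj2⟩ := exists_grid_le_lt (by exact_mod_cast hs : (0 : ℤ) < s) o.2 m.2
  refine ⟨i, j, fun x ⟨h1, h2, h3, h4⟩ => ?_⟩
  simp only [InBox]
  push_cast
  exact ⟨by linarith, by linarith, by linarith, by linarith⟩

theorem InBox.add_left {m x : ℤ × ℤ} {s : ℕ} (h : InBox m s x) (v : ℤ × ℤ) :
    InBox (v + m) s (v + x) := by
  rwa [inBox_iff_sub, add_sub_add_left_eq_sub, ← inBox_iff_sub]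

theorem OccursAt.occursInSquare_of_agreesOn {A : Type} {F : ℤ × ℤ → A} {D : Finset (ℤ × ℤ)}
    {P : ℤ × ℤ → A} {v p q w : ℤ × ℤ} {s L : ℕ} (hv : OccursAt F D P v)
    (hD : ∀ d ∈ D, InBox q s (v + d)) (hpq : AgreesOn F p q s) (hp : InSquare w L p s) :
    OccursInSquare F D P w L := by
  have hshift : ∀ d, p + v - q + d = p + (v + d - q) := fun d => by abel
  refine ⟨p + v - q, fun d hd => ?_, fun d hd => ?_⟩
  · obtain ⟨h1, h2, h3, h4⟩ := inBox_iff_sub.1 (hD d hd)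
    rw [hshift, hpq _ h1 h2 h3 h4, add_sub_cancel, hv d hd]
  · have hpd : InBox p s (p + (v + d - q)) := by
      rw [inBox_iff_sub, add_sub_cancel_left]
      exact inBox_iff_sub.1 (hD d hd)
    rw [← hshift] at hpd
    exact hp.inBox hpd

theorem quasiperiodic_of_macro_recurrence_general {C : Type} (N : ℕ) (hN : 2 ≤ N)
    (F : ℤ × ℤ → WangTile C)
    (a : ℕ → ℤ × ℤ) (c : ℕ)
    (hrec : ∀ (k : ℕ) (i j : ℤ) (w : ℤ × ℤ), ∃ p : ℤ × ℤ,
      InSquare w (c * N ^ k) p (2 * N ^ k) ∧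
      AgreesOn F p ((a k).1 + i * (N : ℤ) ^ k, (a k).2 + j * (N : ℤ) ^ k) (2 * N ^ k)) :
    UniformlyRecurrent F := by
  rintro D P ⟨v, hv⟩
  obtain ⟨m, k, hm⟩ := D.exists_inBox_pow hN
  obtain ⟨i, j, hij⟩ := exists_grid_inBox_two_mul (pow_pos (by omega : 0 < N) k) (a k) (v + m)
  rw [Nat.cast_pow] at hij
  refine ⟨c * N ^ k, fun w => ?_⟩
  obtain ⟨p, hp, hpq⟩ := hrec k i j w
  exact hv.occursInSquare_of_agreesOn (fun d hd => hij _ ((hm d hd).add_left v)) hpq hp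

/-- If, for some constant `c` independent of `k`, every `2N^k × 2N^k` pattern of `F`
aligned with the rank-`k` macro-tile grid (whose origins are `a k + (N^k)·ℤ²`) occurs in
every square of side `c·N^k`, then `F` is quasiperiodic. -/
theorem quasiperiodic_of_macro_recurrence {C : Type} (N : ℕ) (hN : 2 ≤ N)
    (τ : Set (WangTile C)) (F : ℤ × ℤ → WangTile C) (hF : IsTiling τ F)
    (a : ℕ → ℤ × ℤ) (c : ℕ) (hc : 0 < c)
    (hrec : ∀ (k : ℕ) (i j : ℤ) (w : ℤ × ℤ), ∃ p : ℤ × ℤ,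
      InSquare w (c * N ^ k) p (2 * N ^ k) ∧
      AgreesOn F p ((a k).1 + i * (N : ℤ) ^ k, (a k).2 + j * (N : ℤ) ^ k) (2 * N ^ k)) :
    UniformlyRecurrent F :=
  quasiperiodic_of_macro_recurrence_general N hN F a c hrec
end

section
/- If a tile set τ admits at least one tiling of the plane, then it admits at least one quasiperiodic tiling of the plane. -/
/-
The tilings of `τ` form a nonempty closed shift-invariant subset of the compact space
`(ℤ × ℤ) → WangTile C`, so by Zorn's lemma and Cantor's intersection theorem it contains a minimal
nonempty closed invariant set `m`. For a pattern `P` occurring in some `T ∈ m`, the points of `m`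
whose shift orbit avoids the (open) cylinder of `P` form a closed invariant proper subset of `m`,
hence none exist; by compactness finitely many shifts already bring every point of `m` into the
cylinder, and these bound the size of a square in which `P` is guaranteed to occur.
-/

open Set SymbolicDynamics.FullShift

section MinimalSet

variable {ι X : Type*} [TopologicalSpace X]

def IsMinimalSet (f : ι → X → X) (m : Set X) : Prop :=
  Minimal (fun s : Set X => s.Nonempty ∧ IsClosed s ∧ IsInvariant f s) m

theorem exists_isMinimalSet_subset [CompactSpace X] (f : ι → X → X) {s : Set X}
    (hne : s.Nonempty) (hclosed : IsClosed s) (hinv : IsInvariant f s) :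
    ∃ m ⊆ s, IsMinimalSet f m := by
  refine zorn_superset_nonempty _ (fun c hc hchain hcne => ?_) s ⟨hne, hclosed, hinv⟩
  have : Nonempty c := hcne.to_subtype
  refine ⟨⋂₀ c, ⟨?_, isClosed_sInter fun t ht => (hc ht).2.1, ?_⟩,
    fun t ht => sInter_subset_of_mem ht⟩
  · exact IsCompact.nonempty_sInter_of_directed_nonempty_isCompact_isClosed
      (hchain.symm.directedOn (r := fun a b : Set X => a ⊇ b)) (fun t ht => (hc ht).1)
      (fun t ht => (hc ht).2.1.isCompact) fun t ht => (hc ht).2.1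
  · exact fun i x hx t ht => (hc ht).2.2 i (hx t ht)

variable {f : ι → X → X} {m : Set X}

theorem IsMinimalSet.nonempty (hm : IsMinimalSet f m) : m.Nonempty := hm.prop.1

theorem IsMinimalSet.isClosed (hm : IsMinimalSet f m) : IsClosed m := hm.prop.2.1

theorem IsMinimalSet.isInvariant (hm : IsMinimalSet f m) : IsInvariant f m := hm.prop.2.2

end MinimalSet

section Subshift

variable {A G : Type*} [TopologicalSpace A] [AddMonoid G]

theorem IsMinimalSet.exists_shift_mem {m U : Set (G → A)} (hm : IsMinimalSet shift m)
    (hU : IsOpen U) (hmU : (m ∩ U).Nonempty) {x : G → A} (hx : x ∈ m) :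
    ∃ g, shift g x ∈ U := by
  by_contra! hxU
  let Y := m ∩ ⋂ g, shift g ⁻¹' Uᶜ
  have hYclosed : IsClosed Y := hm.isClosed.inter <| isClosed_iInter fun g =>
    hU.isClosed_compl.preimage (continuous_shift g)
  have hYinv : IsInvariant shift Y := fun h y hy =>
    ⟨hm.isInvariant h hy.1, mem_iInter.2 fun g => by
      simpa only [mem_preimage, ← shift_add] using mem_iInter.1 hy.2 (h + g)⟩
  have hYm : Y = m :=
    hm.eq_of_subset ⟨⟨x, hx, mem_iInter.2 hxU⟩, hYclosed, hYinv⟩ inter_subset_left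
  obtain ⟨y, hym, hyU⟩ := hmU
  rw [← hYm] at hym
  exact mem_iInter.1 hym.2 0 (by simpa using hyU)

theorem IsMinimalSet.exists_finset_forall_shift_mem [CompactSpace A] {m U : Set (G → A)}
    (hm : IsMinimalSet shift m) (hU : IsOpen U) (hmU : (m ∩ U).Nonempty) :
    ∃ I : Finset G, ∀ x ∈ m, ∃ g ∈ I, shift g x ∈ U := by
  obtain ⟨I, hI⟩ := hm.isClosed.isCompact.elim_finite_subcover (fun g => shift g ⁻¹' U)
    (fun g => hU.preimage (continuous_shift g))
    fun x hx => mem_iUnion.2 (hm.exists_shift_mem hU hmU hx)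
  exact ⟨I, fun x hx => by simpa using hI hx⟩

end Subshift

theorem exists_abs_add_le (I D : Finset (ℤ × ℤ)) :
    ∃ R : ℕ, ∀ w ∈ I, ∀ d ∈ D, |w.1 + d.1| ≤ R ∧ |w.2 + d.2| ≤ R := by
  refine ⟨(I ×ˢ D).sup fun p => max (p.1.1 + p.2.1).natAbs (p.1.2 + p.2.2).natAbs,
    fun w hw d hd => ?_⟩
  have hle := Finset.le_sup (f := fun p : (ℤ × ℤ) × (ℤ × ℤ) =>
    max (p.1.1 + p.2.1).natAbs (p.1.2 + p.2.2).natAbs) (Finset.mk_mem_product hw hd)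
  simp only [max_le_iff] at hle
  constructor <;> rw [Int.abs_eq_natAbs] <;> exact Nat.cast_le.2 (by omega)

theorem occursInSquare_of_occursAt {A : Type} {F : ℤ × ℤ → A} {D : Finset (ℤ × ℤ)}
    {P : ℤ × ℤ → A} {R : ℕ} {w : ℤ × ℤ} (c : ℤ × ℤ)
    (hocc : OccursAt F D P (c + ((R : ℤ), (R : ℤ)) + w))
    (hw : ∀ d ∈ D, |w.1 + d.1| ≤ R ∧ |w.2 + d.2| ≤ R) :
    OccursInSquare F D P c (2 * R + 1) := by
  refine ⟨_, hocc, fun d hd => ?_⟩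
  obtain ⟨h₁, h₂⟩ := hw d hd
  rw [abs_le] at h₁ h₂
  simp only [Prod.fst_add, Prod.snd_add]
  push_cast
  omega

-- Finitely many shifts `w ∈ I` bring every point of `m` into the cylinder of `P`; applied to
-- `F` pre-shifted by `c + (R, R)`, this puts an occurrence of `P` inside the square at `c`.
theorem IsMinimalSet.uniformlyRecurrent {A : Type} [TopologicalSpace A] [DiscreteTopology A]
    [CompactSpace A] {m : Set (ℤ × ℤ → A)} (hm : IsMinimalSet shift m) {F : ℤ × ℤ → A}
    (hF : F ∈ m) : UniformlyRecurrent F := by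
  rintro D P ⟨v, hv⟩
  obtain ⟨I, hI⟩ := hm.exists_finset_forall_shift_mem (isOpen_cylinder D P)
    ⟨shift v F, hm.isInvariant v hF, hv⟩
  obtain ⟨R, hR⟩ := exists_abs_add_le I D
  refine ⟨2 * R + 1, fun c => ?_⟩
  obtain ⟨w, hwI, hw⟩ := hI _ (hm.isInvariant (c + ((R : ℤ), (R : ℤ))) hF)
  rw [← shift_add] at hw
  exact occursInSquare_of_occursAt c hw (hR w hwI)

namespace WangTile

variable {C : Type}

instance : TopologicalSpace (WangTile C) := ⊥

instance : DiscreteTopology (WangTile C) := ⟨rfl⟩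

instance [Finite C] : Finite (WangTile C) :=
  Finite.of_injective (fun t => (t.left, t.right, t.bottom, t.top)) fun s t h => by
    cases s; cases t; simp_all

end WangTile

section Tiling

variable {C : Type} (τ : Set (WangTile C))

theorem isClosed_setOf_isTiling : IsClosed {T | IsTiling τ T} := by
  simp only [IsTiling, ofPred_and, ofPred_forall]
  refine .inter (isClosed_iInter fun x => ?_) (.inter (isClosed_iInter fun x =>
    isClosed_iInter fun y => ?_) (isClosed_iInter fun x => isClosed_iInter fun y => ?_))
  · exact (isClosed_discrete τ).preimage (continuous_apply x)
  · exact (isClosed_discrete {p : WangTile C × WangTile C | p.1.right = p.2.left}).preimage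
      (f := fun T : ℤ × ℤ → WangTile C => (T (x, y), T (x + 1, y))) (by fun_prop)
  · exact (isClosed_discrete {p : WangTile C × WangTile C | p.1.top = p.2.bottom}).preimage
      (f := fun T : ℤ × ℤ → WangTile C => (T (x, y), T (x, y + 1))) (by fun_prop)

theorem isInvariant_setOf_isTiling : IsInvariant shift {T | IsTiling τ T} := by
  rintro ⟨a, b⟩ T ⟨hτ, hright, htop⟩
  refine ⟨fun x => hτ _, fun x y => ?_, fun x y => ?_⟩
  · simpa only [shift_apply, Prod.mk_add_mk, add_assoc] using hright (a + x) (b + y)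
  · simpa only [shift_apply, Prod.mk_add_mk, add_assoc] using htop (a + x) (b + y)

end Tiling

/-- If a tile set admits a tiling of the plane then it admits a quasiperiodic
(uniformly recurrent) tiling of the plane. -/
theorem exists_quasiperiodic_tiling {C : Type} [Fintype C]
    (τ : Set (WangTile C)) (h : ∃ T, IsTiling τ T) :
    ∃ T, IsTiling τ T ∧ UniformlyRecurrent T := by
  obtain ⟨m, hm_sub, hm⟩ := exists_isMinimalSet_subset shift h
    (isClosed_setOf_isTiling τ) (isInvariant_setOf_isTiling τ)
  obtain ⟨T, hT⟩ := hm.nonempty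
  exact ⟨T, hm_sub hT, hm.uniformlyRecurrent hT⟩
end

section
/- Let M be a deterministic Turing machine simulated by a space-time diagram tiling in the standard way (rows are configurations, time goes up). Then the resulting local rule is 2×2-deterministic: the contents of any 2×2 block of cells in the diagram are uniquely determined by the colors on the boundary of the block (the 8 colors on the outer sides of the four cells). -/
/-- Colors for the space-time-diagram tile set of a Turing machine with states `Q` and
tape alphabet `Γ`: horizontal colors carry a tape symbol, possibly with the head and its
state (`Sum.inl`); vertical colors carry an optional head-crossing signal, a state
together with a direction bit (`Sum.inr`). -/
abbrev TMColor (Q Γ : Type) : Type := (Γ ⊕ Q × Γ) ⊕ Option (Q × Bool)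

/-- The standard Wang tile set simulating the deterministic machine `δ : Q → Γ → Q × Γ × Bool`
(new state, written symbol, direction: `true` = right) in a space-time diagram, rows being
configurations and time going up: quiescent tiles, action tiles (head executes a step and
emits a signal left or right), and receiving tiles (head arrives from a neighbor). -/
def tmTiles {Q Γ : Type} (δ : Q → Γ → Q × Γ × Bool) : Set (WangTile (TMColor Q Γ)) :=
  {t | (∃ a : Γ, t = ⟨.inr none, .inr none, .inl (.inl a), .inl (.inl a)⟩) ∨
       (∃ q a, (δ q a).2.2 = true ∧
         t = ⟨.inr none, .inr (some ((δ q a).1, true)),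
              .inl (.inr (q, a)), .inl (.inl (δ q a).2.1)⟩) ∨
       (∃ q a, (δ q a).2.2 = false ∧
         t = ⟨.inr (some ((δ q a).1, false)), .inr none,
              .inl (.inr (q, a)), .inl (.inl (δ q a).2.1)⟩) ∨
       (∃ q a, t = ⟨.inr (some (q, true)), .inr none,
              .inl (.inl a), .inl (.inr (q, a))⟩) ∨
       (∃ q a, t = ⟨.inr none, .inr (some (q, false)),
              .inl (.inl a), .inl (.inr (q, a))⟩)}

/-- A correctly tiled 2×2 block: `f i j` is the tile in column `i`, row `j`, with
matching internal edges. -/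
def Block2x2 {Q Γ : Type} (δ : Q → Γ → Q × Γ × Bool)
    (f : Fin 2 → Fin 2 → WangTile (TMColor Q Γ)) : Prop :=
  (∀ i j, f i j ∈ tmTiles δ) ∧
  (f 0 0).right = (f 1 0).left ∧ (f 0 1).right = (f 1 1).left ∧
  (f 0 0).top = (f 0 1).bottom ∧ (f 1 0).top = (f 1 1).bottom

/-!
A tile is determined by its left, right and bottom colors. In a row of two tiles the color of
the common edge is determined by the two bottom colors alone: a head signal on it comes either
from a head in the bottom of the left tile moving right or from one in the bottom of the right
tile moving left, and these are read off from `δ`; otherwise the edge is blank. Hence the bottom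
row of a block is determined by its boundary colors, and its top colors, being the bottom
colors of the top row, determine that row in the same way.
-/

section TMTiles

variable {Q Γ : Type} {δ : Q → Γ → Q × Γ × Bool} {t s : WangTile (TMColor Q Γ)}

lemma exists_right_eq_inr_of_mem_tmTiles (ht : t ∈ tmTiles δ) :
    ∃ o, t.right = .inr o := by
  rcases ht with ⟨a, rfl⟩ | ⟨q, a, -, rfl⟩ | ⟨q, a, -, rfl⟩ | ⟨q, a, rfl⟩ | ⟨q, a, rfl⟩ <;>
    exact ⟨_, rfl⟩

lemma right_eq_of_bottom_eq_of_rightward (ht : t ∈ tmTiles δ) (hs : s ∈ tmTiles δ)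
    (hb : t.bottom = s.bottom) {q : Q}
    (hr : t.right = .inr (some (q, true))) : s.right = t.right := by
  rcases ht with ⟨a, rfl⟩ | ⟨q, a, hd, rfl⟩ | ⟨q, a, hd, rfl⟩ | ⟨q, a, rfl⟩ | ⟨q, a, rfl⟩ <;>
  rcases hs with ⟨a', rfl⟩ | ⟨q', a', hd', rfl⟩ | ⟨q', a', hd', rfl⟩ | ⟨q', a', rfl⟩ |
    ⟨q', a', rfl⟩ <;>
  simp_all

lemma left_eq_of_bottom_eq_of_leftward (ht : t ∈ tmTiles δ) (hs : s ∈ tmTiles δ)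
    (hb : t.bottom = s.bottom) {q : Q}
    (hl : t.left = .inr (some (q, false))) : s.left = t.left := by
  rcases ht with ⟨a, rfl⟩ | ⟨q, a, hd, rfl⟩ | ⟨q, a, hd, rfl⟩ | ⟨q, a, rfl⟩ | ⟨q, a, rfl⟩ <;>
  rcases hs with ⟨a', rfl⟩ | ⟨q', a', hd', rfl⟩ | ⟨q', a', hd', rfl⟩ | ⟨q', a', rfl⟩ |
    ⟨q', a', rfl⟩ <;>
  simp_all

lemma eq_of_left_right_bottom_eq (ht : t ∈ tmTiles δ) (hs : s ∈ tmTiles δ)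
    (hl : t.left = s.left) (hr : t.right = s.right) (hb : t.bottom = s.bottom) : t = s := by
  rcases ht with ⟨a, rfl⟩ | ⟨q, a, hd, rfl⟩ | ⟨q, a, hd, rfl⟩ | ⟨q, a, rfl⟩ | ⟨q, a, rfl⟩ <;>
  rcases hs with ⟨a', rfl⟩ | ⟨q', a', hd', rfl⟩ | ⟨q', a', hd', rfl⟩ | ⟨q', a', rfl⟩ |
    ⟨q', a', rfl⟩ <;>
  simp_all

variable {t₀ t₁ s₀ s₁ : WangTile (TMColor Q Γ)}

lemma middle_eq_of_bottom_eq_of_signal (ht₀ : t₀ ∈ tmTiles δ) (ht₁ : t₁ ∈ tmTiles δ)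
    (hs₀ : s₀ ∈ tmTiles δ) (hs₁ : s₁ ∈ tmTiles δ)
    (ht : t₀.right = t₁.left) (hs : s₀.right = s₁.left)
    (hb₀ : t₀.bottom = s₀.bottom) (hb₁ : t₁.bottom = s₁.bottom) {p : Q × Bool}
    (hp : t₀.right = .inr (some p)) : s₀.right = t₀.right := by
  obtain ⟨q, _ | _⟩ := p
  · rw [ht] at hp ⊢
    rw [hs]
    exact left_eq_of_bottom_eq_of_leftward ht₁ hs₁ hb₁ hp
  · exact right_eq_of_bottom_eq_of_rightward ht₀ hs₀ hb₀ hp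

lemma middle_eq_of_bottom_eq (ht₀ : t₀ ∈ tmTiles δ) (ht₁ : t₁ ∈ tmTiles δ)
    (hs₀ : s₀ ∈ tmTiles δ) (hs₁ : s₁ ∈ tmTiles δ)
    (ht : t₀.right = t₁.left) (hs : s₀.right = s₁.left)
    (hb₀ : t₀.bottom = s₀.bottom) (hb₁ : t₁.bottom = s₁.bottom) : t₀.right = s₀.right := by
  obtain ⟨_ | p, hto⟩ := exists_right_eq_inr_of_mem_tmTiles ht₀
  · obtain ⟨_ | p', hso⟩ := exists_right_eq_inr_of_mem_tmTiles hs₀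
    · rw [hto, hso]
    · exact middle_eq_of_bottom_eq_of_signal hs₀ hs₁ ht₀ ht₁ hs ht hb₀.symm hb₁.symm hso
  · exact (middle_eq_of_bottom_eq_of_signal ht₀ ht₁ hs₀ hs₁ ht hs hb₀ hb₁ hto).symm

lemma row_eq_of_boundary_eq (ht₀ : t₀ ∈ tmTiles δ) (ht₁ : t₁ ∈ tmTiles δ)
    (hs₀ : s₀ ∈ tmTiles δ) (hs₁ : s₁ ∈ tmTiles δ)
    (ht : t₀.right = t₁.left) (hs : s₀.right = s₁.left)
    (hl : t₀.left = s₀.left) (hr : t₁.right = s₁.right)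
    (hb₀ : t₀.bottom = s₀.bottom) (hb₁ : t₁.bottom = s₁.bottom) : t₀ = s₀ ∧ t₁ = s₁ := by
  have hm := middle_eq_of_bottom_eq ht₀ ht₁ hs₀ hs₁ ht hs hb₀ hb₁
  exact ⟨eq_of_left_right_bottom_eq ht₀ hs₀ hl hm hb₀,
    eq_of_left_right_bottom_eq ht₁ hs₁ (by rw [← ht, ← hs, hm]) hr hb₁⟩

end TMTiles

theorem tm_tiles_two_by_two_deterministic_general {Q Γ : Type} (δ : Q → Γ → Q × Γ × Bool)
    (f g : Fin 2 → Fin 2 → WangTile (TMColor Q Γ))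
    (hf : Block2x2 δ f) (hg : Block2x2 δ g)
    (hbottom : (f 0 0).bottom = (g 0 0).bottom ∧ (f 1 0).bottom = (g 1 0).bottom)
    (hleft : (f 0 0).left = (g 0 0).left ∧ (f 0 1).left = (g 0 1).left)
    (hright : (f 1 0).right = (g 1 0).right ∧ (f 1 1).right = (g 1 1).right) :
    f = g := by
  obtain ⟨hfmem, hf₀, hf₁, hfv₀, hfv₁⟩ := hf
  obtain ⟨hgmem, hg₀, hg₁, hgv₀, hgv₁⟩ := hg
  obtain ⟨h00, h10⟩ := row_eq_of_boundary_eq (hfmem 0 0) (hfmem 1 0) (hgmem 0 0) (hgmem 1 0)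
    hf₀ hg₀ hleft.1 hright.1 hbottom.1 hbottom.2
  obtain ⟨h01, h11⟩ := row_eq_of_boundary_eq (hfmem 0 1) (hfmem 1 1) (hgmem 0 1) (hgmem 1 1)
    hf₁ hg₁ hleft.2 hright.2 (by rw [← hfv₀, ← hgv₀, h00]) (by rw [← hfv₁, ← hgv₁, h10])
  funext i j
  fin_cases i <;> fin_cases j <;> assumption

/-- 2×2-determinicity of the space-time diagram tile set of a deterministic Turing
machine: the four tiles of a correctly tiled 2×2 block are uniquely determined by the
eight colors on the boundary of the block. -/
theorem tm_tiles_two_by_two_deterministic {Q Γ : Type} (δ : Q → Γ → Q × Γ × Bool)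
    (f g : Fin 2 → Fin 2 → WangTile (TMColor Q Γ))
    (hf : Block2x2 δ f) (hg : Block2x2 δ g)
    (hbottom : (f 0 0).bottom = (g 0 0).bottom ∧ (f 1 0).bottom = (g 1 0).bottom)
    (htop : (f 0 1).top = (g 0 1).top ∧ (f 1 1).top = (g 1 1).top)
    (hleft : (f 0 0).left = (g 0 0).left ∧ (f 0 1).left = (g 0 1).left)
    (hright : (f 1 0).right = (g 1 0).right ∧ (f 1 1).right = (g 1 1).right) :
    f = g :=
  tm_tiles_two_by_two_deterministic_general δ f g hf hg hbottom hleft hright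
end
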